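/- Let I be a PCP instance in which every word u^ℓ_i has length at least 2, and let Γ := {#, p₁,…,pₙ}. Then I has a solution if and only if there exist two well-formed traces π₁ and π₂ such that: (1) for each ℓ ∈ {1,2}, π_ℓ contains no occurrence of q_{3−ℓ}, i.e., q_{3−ℓ} ∉ π_ℓ(h) for all h ∈ ℕ; (2) the projections of π₁ and π₂ over Σ coincide, i.e., for all h ∈ ℕ and p ∈ Σ, p ∈ π₁(h) iff p ∈ π₂(h); and (3) the projections of stfr_Γ(π₁) and stfr_Γ(π₂) over Γ coincide, i.e., for all h ∈ ℕ and p ∈ Γ, p ∈ stfr_Γ(π₁)(h) iff p ∈ stfr_Γ(π₂)(h). -/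

import Mathlib

set_option linter.unusedVariables false

open Classical

/-- A trace over a set `AP` of atomic propositions: an infinite word over `2^AP`. -/
abbrev Trace (AP : Type) : Type := ℕ → Set AP

/-- Syntax of LTL formulas over `AP` (with `⊤`). -/
inductive LTL (AP : Type) : Type where
  | tt   : LTL AP
  | atom : AP → LTL AP
  | neg  : LTL AP → LTL AP
  | conj : LTL AP → LTL AP → LTL AP
  | next : LTL AP → LTL AP
  | untl : LTL AP → LTL AP → LTL AP
deriving DecidableEq

namespace LTL

/-- Satisfaction of an LTL formula on a pointed trace. -/
def Sat {AP : Type} : LTL AP → Trace AP → ℕ → Prop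
  | tt, _, _ => True
  | atom p, π, i => p ∈ π i
  | neg θ, π, i => ¬ Sat θ π i
  | conj θ₁ θ₂, π, i => Sat θ₁ π i ∧ Sat θ₂ π i
  | next θ, π, i => Sat θ π (i + 1)
  | untl θ₁ θ₂, π, i => ∃ j, i ≤ j ∧ Sat θ₂ π j ∧ ∀ k, i ≤ k → k < j → Sat θ₁ π k

def or {AP : Type} (a b : LTL AP) : LTL AP := neg (conj (neg a) (neg b))
def impl {AP : Type} (a b : LTL AP) : LTL AP := or (neg a) b
def iff {AP : Type} (a b : LTL AP) : LTL AP := conj (impl a b) (impl b a)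
def ev {AP : Type} (a : LTL AP) : LTL AP := untl tt a
def alw {AP : Type} (a : LTL AP) : LTL AP := neg (ev (neg a))

def bigConj {AP : Type} : List (LTL AP) → LTL AP
  | [] => tt
  | θ :: l => conj θ (bigConj l)

def bigDisj {AP : Type} : List (LTL AP) → LTL AP
  | [] => neg tt
  | θ :: l => or θ (bigDisj l)

/-- The subformulas of an LTL formula. -/
def subf {AP : Type} [DecidableEq AP] : LTL AP → Finset (LTL AP)
  | tt => {tt}
  | atom p => {atom p}
  | neg θ => insert (neg θ) (subf θ)
  | conj a b => insert (conj a b) (subf a ∪ subf b)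
  | next θ => insert (next θ) (subf θ)
  | untl a b => insert (untl a b) (subf a ∪ subf b)

/-- Negation, identifying `¬¬θ` with `θ`. -/
def negId {AP : Type} : LTL AP → LTL AP
  | neg θ => θ
  | θ => neg θ

end LTL

/-- The closure of a finite set of LTL formulas: all subformulas and their
negations (identifying `¬¬θ` with `θ`). -/
def clOf {AP : Type} [DecidableEq AP] (Γ : Finset (LTL AP)) : Finset (LTL AP) :=
  (Γ.biUnion LTL.subf) ∪ (Γ.biUnion LTL.subf).image LTL.negId

/-- Positions `h` and `k` of `π` disagree on the truth value of some formula of `Γ`. -/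
def profDiff {AP : Type} (Γ : Set (LTL AP)) (π : Trace AP) (h k : ℕ) : Prop :=
  ∃ θ ∈ Γ, ¬ (LTL.Sat θ π h ↔ LTL.Sat θ π k)

/-- `IsStutterFact Γ π m f` : the increasing sequence of positions `f 0, f 1, …`
(of length `m + 1`, where `m ∈ ℕ∪{∞}`) is the Γ-stutter factorization of `π`:
`f 0 = 0`; the sequence is strictly increasing (below `m`); the truth value of every
formula of `Γ` is constant on each segment `[f j, f (j+1))` for `j < m` and on the
final infinite segment `[f m, ∞)` when `m` is finite; and between two adjacent
segments the truth value of some formula of `Γ` changes. -/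
def IsStutterFact {AP : Type} (Γ : Set (LTL AP)) (π : Trace AP) (m : ℕ∞) (f : ℕ → ℕ) : Prop :=
  f 0 = 0 ∧
  (∀ j : ℕ, (j : ℕ∞) < m → f j < f (j + 1)) ∧
  (∀ j : ℕ, (j : ℕ∞) < m → ∀ θ ∈ Γ, ∀ h k : ℕ,
      f j ≤ h → h < f (j + 1) → f j ≤ k → k < f (j + 1) →
      (LTL.Sat θ π h ↔ LTL.Sat θ π k)) ∧
  (∀ mf : ℕ, m = (mf : ℕ∞) → ∀ θ ∈ Γ, ∀ h k : ℕ,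
      f mf ≤ h → f mf ≤ k → (LTL.Sat θ π h ↔ LTL.Sat θ π k)) ∧
  (∀ j : ℕ, (j : ℕ∞) < m → ∃ θ ∈ Γ, (LTL.Sat θ π (f j) ↔ ¬ LTL.Sat θ π (f (j + 1))))

/-- The position component of the Γ-successor `succ_Γ(π, i)` of a pointed trace:
the first position of the segment (of the Γ-stutter factorization of `π`)
following the one containing `i`, if it exists, and `i + 1` otherwise. -/
noncomputable def succPos {AP : Type} (Γ : Set (LTL AP)) (π : Trace AP) (i : ℕ) : ℕ :=
  if h : ∃ j, i < j ∧ profDiff Γ π i j then Nat.find h else i + 1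

/-- The sequence of positions of `π` selected by the Γ-stutter trace of `π`. -/
noncomputable def stfrNth {AP : Type} (Γ : Set (LTL AP)) (π : Trace AP) : ℕ → ℕ
  | 0 => 0
  | k + 1 => succPos Γ π (stfrNth Γ π k)

/-- The Γ-stutter trace `stfr_Γ(π)` of `π`. -/
noncomputable def stfr {AP : Type} (Γ : Set (LTL AP)) (π : Trace AP) : Trace AP :=
  fun k => π (stfrNth Γ π k)

/-- Syntax of LTL_S: LTL with stutter-relativized temporal modalities. -/
inductive LTLS (AP : Type) : Type where
  | tt    : LTLS AP
  | atom  : AP → LTLS AP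
  | neg   : LTLS AP → LTLS AP
  | conj  : LTLS AP → LTLS AP → LTLS AP
  | nextR : Finset (LTL AP) → LTLS AP → LTLS AP
  | untlR : Finset (LTL AP) → LTLS AP → LTLS AP → LTLS AP

/-- Satisfaction of an LTL_S formula on a pointed trace. -/
def LTLS.Sat {AP : Type} : LTLS AP → Trace AP → ℕ → Prop
  | .tt, _, _ => True
  | .atom p, π, i => p ∈ π i
  | .neg ψ, π, i => ¬ LTLS.Sat ψ π i
  | .conj a b, π, i => LTLS.Sat a π i ∧ LTLS.Sat b π i
  | .nextR Γ ψ, π, i => LTLS.Sat ψ π (succPos (↑Γ) π i)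
  | .untlR Γ a b, π, i => ∃ j : ℕ,
      LTLS.Sat b π ((succPos (↑Γ : Set (LTL AP)) π)^[j] i) ∧
      ∀ k < j, LTLS.Sat a π ((succPos (↑Γ : Set (LTL AP)) π)^[k] i)

/-- A pointed trace assignment: maps each trace variable to a pointed trace. -/
abbrev PTA (AP V : Type) : Type := V → Trace AP × ℕ

/-- The Γ-successor of a pointed trace assignment. -/
noncomputable def succA {AP V : Type} (Γ : Set (LTL AP)) (Δ : PTA AP V) : PTA AP V :=
  fun x => ((Δ x).1, succPos Γ (Δ x).1 (Δ x).2)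

/-- Quantifier-free HyperLTL_S formulas over propositions `AP` and trace variables `V`. -/
inductive HSQF (AP V : Type) : Type where
  | tt    : HSQF AP V
  | atom  : AP → V → HSQF AP V
  | neg   : HSQF AP V → HSQF AP V
  | conj  : HSQF AP V → HSQF AP V → HSQF AP V
  | nextR : Finset (LTL AP) → HSQF AP V → HSQF AP V
  | untlR : Finset (LTL AP) → HSQF AP V → HSQF AP V → HSQF AP V

namespace HSQF

/-- Satisfaction of a quantifier-free HyperLTL_S formula on a pointed trace assignment. -/
def Sat {AP V : Type} : HSQF AP V → PTA AP V → Prop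
  | tt, _ => True
  | atom p x, Δ => p ∈ (Δ x).1 (Δ x).2
  | neg ψ, Δ => ¬ Sat ψ Δ
  | conj a b, Δ => Sat a Δ ∧ Sat b Δ
  | nextR Γ ψ, Δ => Sat ψ (succA (↑Γ) Δ)
  | untlR Γ a b, Δ => ∃ i : ℕ,
      Sat b ((succA (↑Γ : Set (LTL AP)))^[i] Δ) ∧
      ∀ k < i, Sat a ((succA (↑Γ : Set (LTL AP)))^[k] Δ)

/-- Trace variables occurring in a quantifier-free HyperLTL_S formula. -/
def vars {AP V : Type} : HSQF AP V → Set V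
  | tt => ∅
  | atom _ x => {x}
  | neg ψ => vars ψ
  | conj a b => vars a ∪ vars b
  | nextR _ ψ => vars ψ
  | untlR _ a b => vars a ∪ vars b

/-- The subscripts of the temporal modalities occurring in a formula. -/
def subs {AP V : Type} : HSQF AP V → Set (Finset (LTL AP))
  | tt => ∅
  | atom _ _ => ∅
  | neg ψ => subs ψ
  | conj a b => subs a ∪ subs b
  | nextR Γ ψ => insert Γ (subs ψ)
  | untlR Γ a b => insert Γ (subs a ∪ subs b)

/-- `ψ` is in the fragment HyperLTL_S[Γ]: every modality subscript equals `Γ`. -/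
def InFragment {AP V : Type} (Γ : Finset (LTL AP)) (ψ : HSQF AP V) : Prop :=
  ∀ s ∈ ψ.subs, s = Γ

/-- `ψ` is a one-variable formula. -/
def OneVar {AP V : Type} (ψ : HSQF AP V) : Prop := ∃ x : V, ψ.vars ⊆ {x}

/-- Replace every modality subscript by `∅`, yielding a HyperLTL formula. -/
def toHLTL {AP V : Type} : HSQF AP V → HSQF AP V
  | tt => tt
  | atom p x => atom p x
  | neg ψ => neg (toHLTL ψ)
  | conj a b => conj (toHLTL a) (toHLTL b)
  | nextR _ ψ => nextR ∅ (toHLTL ψ)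
  | untlR _ a b => untlR ∅ (toHLTL a) (toHLTL b)

end HSQF

/-- Boolean combinations of formulas satisfying a base predicate. -/
inductive BoolCombOf {AP V : Type} (P : HSQF AP V → Prop) : HSQF AP V → Prop
  | base {ψ} : P ψ → BoolCombOf P ψ
  | tt : BoolCombOf P .tt
  | neg {ψ} : BoolCombOf P ψ → BoolCombOf P (.neg ψ)
  | conj {a b} : BoolCombOf P a → BoolCombOf P b → BoolCombOf P (.conj a b)

/-- Trace quantifiers. -/
inductive Quant : Type where
  | ex  : Quant
  | all : Quant
deriving DecidableEq

/-- Satisfaction of a block of trace quantifiers followed by a matrix `P`,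
over a set `L` of traces, starting from the assignment `Δ`. -/
def SatPfx {AP V : Type} [DecidableEq V] (L : Set (Trace AP)) :
    List (Quant × V) → (PTA AP V → Prop) → PTA AP V → Prop
  | [], P, Δ => P Δ
  | (Quant.ex, x) :: qs, P, Δ => ∃ π ∈ L, SatPfx L qs P (Function.update Δ x (π, 0))
  | (Quant.all, x) :: qs, P, Δ => ∀ π ∈ L, SatPfx L qs P (Function.update Δ x (π, 0))

/-- A HyperLTL_S sentence: a quantifier prefix and a quantifier-free matrix. -/
structure HSSentence (AP V : Type) : Type where
  pre : List (Quant × V)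
  matrix : HSQF AP V

/-- The sentence is closed: quantified variables are pairwise distinct and
every trace variable of the matrix is bound by the prefix. -/
def HSSentence.Closed {AP V : Type} (φ : HSSentence AP V) : Prop :=
  (φ.pre.map Prod.snd).Nodup ∧ ∀ x ∈ φ.matrix.vars, x ∈ φ.pre.map Prod.snd

/-- `L ⊨ φ` for a HyperLTL_S sentence `φ` and a set `L` of traces. -/
def HSSentence.Models {AP V : Type} [DecidableEq V] (φ : HSSentence AP V)
    (L : Set (Trace AP)) : Prop :=
  ∀ Δ₀ : PTA AP V, SatPfx L φ.pre (fun Δ => φ.matrix.Sat Δ) Δ₀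

/-- A simple HyperLTL_S sentence: its matrix is a Boolean combination of
HyperLTL_S[Γ] formulas (for a common finite set `Γ` of LTL formulas) and of
one-variable quantifier-free formulas. -/
def HSSentence.Simple {AP V : Type} (φ : HSSentence AP V) : Prop :=
  ∃ Γ : Finset (LTL AP),
    BoolCombOf (fun ψ => ψ.InFragment Γ ∨ ψ.OneVar) φ.matrix

/-- A Kripke structure over `AP` with state type `S`. -/
structure Kripke (AP S : Type) : Type where
  init : Set S
  E : Set (S × S)
  total : ∀ s : S, ∃ t : S, (s, t) ∈ E
  V : S → Set AP

namespace Kripke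

/-- A path of a Kripke structure. -/
def IsPath {AP S : Type} (K : Kripke AP S) (ν : ℕ → S) : Prop :=
  ν 0 ∈ K.init ∧ ∀ i : ℕ, (ν i, ν (i + 1)) ∈ K.E

/-- The set of traces of a Kripke structure. -/
def Lang {AP S : Type} (K : Kripke AP S) : Set (Trace AP) :=
  {π | ∃ ν : ℕ → S, K.IsPath ν ∧ π = fun i => K.V (ν i)}

/-- The set of traces of `F`-fair paths of a Kripke structure. -/
def FairLang {AP S : Type} (K : Kripke AP S) (F : Set S) : Set (Trace AP) :=
  {π | ∃ ν : ℕ → S, K.IsPath ν ∧ (∀ N : ℕ, ∃ i, N ≤ i ∧ ν i ∈ F) ∧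
        π = fun i => K.V (ν i)}

end Kripke

/-- A finite Kripke structure over `AP` (states are `Fin n`). -/
structure FinKripke (AP : Type) : Type where
  n : ℕ
  K : Kripke AP (Fin n)

def FinKripke.Lang {AP : Type} (K : FinKripke AP) : Set (Trace AP) := K.K.Lang

def FinKripke.FairLang {AP : Type} (K : FinKripke AP) (F : Set (Fin K.n)) :
    Set (Trace AP) := K.K.FairLang F

/-- A nondeterministic Büchi automaton over alphabet `Sig` (finitely many states). -/
structure NBA (Sig : Type) : Type where
  n : ℕ
  init : Set (Fin n)
  trans : Set (Fin n × Sig × Fin n)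
  acc : Set (Fin n)

/-- The ω-language of an NBA. -/
def NBA.Lang {Sig : Type} (A : NBA Sig) : Set (ℕ → Sig) :=
  {w | ∃ ρ : ℕ → Fin A.n, ρ 0 ∈ A.init ∧ (∀ i : ℕ, (ρ i, w i, ρ (i + 1)) ∈ A.trans) ∧
        ∀ N : ℕ, ∃ i, N ≤ i ∧ ρ i ∈ A.acc}

/-- Positive Boolean formulas over `X`. -/
inductive PosBool (X : Type) : Type where
  | tt   : PosBool X
  | ff   : PosBool X
  | var  : X → PosBool X
  | por  : PosBool X → PosBool X → PosBool X
  | pand : PosBool X → PosBool X → PosBool X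

/-- Satisfaction of a positive Boolean formula by a set of variables. -/
def PosBool.SatBy {X : Type} (S : Set X) : PosBool X → Prop
  | .tt => True
  | .ff => False
  | .var x => x ∈ S
  | .por a b => a.SatBy S ∨ b.SatBy S
  | .pand a b => a.SatBy S ∧ b.SatBy S

/-- A Büchi alternating asynchronous word automaton with `m` directions (an `mAAWA`)
over alphabet `Sig`, with finitely many states. -/
structure AAWA (Sig : Type) (m : ℕ) : Type where
  n : ℕ
  init : Fin n
  trans : Fin n → (Fin m → Sig) → PosBool (Fin n × Fin m)
  acc : Set (Fin n)

/-- A run of an `mAAWA` over an `m`-tuple of infinite words: a `(Q × ℕ^m)`-labeled tree. -/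
structure AAWARun {Sig : Type} {m : ℕ} (A : AAWA Sig m) (w : Fin m → (ℕ → Sig)) : Type where
  T : Set (List ℕ)
  Lab : List ℕ → Fin A.n × (Fin m → ℕ)
  rootMem : [] ∈ T
  pclosed : ∀ τ ∈ T, ∀ σ : List ℕ, σ <+: τ → σ ∈ T
  rootLab : Lab [] = (A.init, fun _ => 0)
  step : ∀ τ ∈ T, ∃ (k : ℕ) (c : Fin k → Fin A.n × Fin m),
      (A.trans (Lab τ).1 (fun d => w d ((Lab τ).2 d))).SatBy (Set.range c) ∧
      (∀ j : ℕ, τ ++ [j] ∈ T ↔ j < k) ∧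
      ∀ j : Fin k, Lab (τ ++ [j.1]) =
        ((c j).1, fun d => if d = (c j).2 then (Lab τ).2 d + 1 else (Lab τ).2 d)

/-- The node of a branch at depth `i`. -/
def branchPrefix (b : ℕ → ℕ) (i : ℕ) : List ℕ := (List.range i).map b

/-- `b` describes an infinite branch of the run tree. -/
def AAWARun.IsBranch {Sig : Type} {m : ℕ} {A : AAWA Sig m} {w : Fin m → (ℕ → Sig)}
    (r : AAWARun A w) (b : ℕ → ℕ) : Prop :=
  ∀ i : ℕ, branchPrefix b i ∈ r.T

/-- A run is accepting if every infinite branch visits accepting states infinitely often. -/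
def AAWARun.Accepting {Sig : Type} {m : ℕ} {A : AAWA Sig m} {w : Fin m → (ℕ → Sig)}
    (r : AAWARun A w) : Prop :=
  ∀ b : ℕ → ℕ, r.IsBranch b → ∀ N : ℕ, ∃ i, N ≤ i ∧ (r.Lab (branchPrefix b i)).1 ∈ A.acc

/-- The language of an `mAAWA`: the `m`-tuples of infinite words admitting an accepting run. -/
def AAWA.Lang {Sig : Type} {m : ℕ} (A : AAWA Sig m) : Set (Fin m → (ℕ → Sig)) :=
  {w | ∃ r : AAWARun A w, r.Accepting}

/-- `A` is `k`-synchronous: in every run the reading heads stay within distance `k`. -/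
def AAWA.Synchronous {Sig : Type} {m : ℕ} (A : AAWA Sig m) (k : ℕ) : Prop :=
  ∀ (w : Fin m → (ℕ → Sig)) (r : AAWARun A w), ∀ τ ∈ r.T, ∀ d d' : Fin m,
    (r.Lab τ).2 d ≤ (r.Lab τ).2 d' + k

/-- Quantifier-free HyperLTL_C formulas over propositions `AP` and trace variables `V`:
HyperLTL extended with context modalities `⟨C⟩` for nonempty sets `C` of trace variables. -/
inductive HCQF (AP V : Type) : Type where
  | tt   : HCQF AP V
  | atom : AP → V → HCQF AP V
  | neg  : HCQF AP V → HCQF AP V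
  | conj : HCQF AP V → HCQF AP V → HCQF AP V
  | next : HCQF AP V → HCQF AP V
  | untl : HCQF AP V → HCQF AP V → HCQF AP V
  | ctx  : (C : Set V) → C.Nonempty → HCQF AP V → HCQF AP V

/-- `Δ +_C i` : advance by `i` the positions of the pointed traces assigned to
the variables in the context `C`, leaving the others unchanged. -/
noncomputable def shiftA {AP V : Type} (Δ : PTA AP V) (C : Set V) (i : ℕ) : PTA AP V :=
  fun x => if x ∈ C then ((Δ x).1, (Δ x).2 + i) else Δ x

namespace HCQF

/-- Satisfaction `(Δ, C) ⊨ ψ` of a quantifier-free HyperLTL_C formula. -/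
def Sat {AP V : Type} : HCQF AP V → PTA AP V → Set V → Prop
  | tt, _, _ => True
  | atom p x, Δ, _ => p ∈ (Δ x).1 (Δ x).2
  | neg ψ, Δ, C => ¬ Sat ψ Δ C
  | conj a b, Δ, C => Sat a Δ C ∧ Sat b Δ C
  | next ψ, Δ, C => Sat ψ (shiftA Δ C 1) C
  | untl a b, Δ, C => ∃ i : ℕ, Sat b (shiftA Δ C i) C ∧ ∀ k < i, Sat a (shiftA Δ C k) C
  | ctx C' _ ψ, Δ, _ => Sat ψ Δ C'

/-- Trace variables occurring in a quantifier-free HyperLTL_C formula. -/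
def vars {AP V : Type} : HCQF AP V → Set V
  | tt => ∅
  | atom _ x => {x}
  | neg ψ => vars ψ
  | conj a b => vars a ∪ vars b
  | next ψ => vars ψ
  | untl a b => vars a ∪ vars b
  | ctx _ _ ψ => vars ψ

/-- The set of subformulas of a quantifier-free HyperLTL_C formula. -/
def subf {AP V : Type} : HCQF AP V → Set (HCQF AP V)
  | tt => {tt}
  | atom p x => {atom p x}
  | neg ψ => insert (neg ψ) (subf ψ)
  | conj a b => insert (conj a b) (subf a ∪ subf b)
  | next ψ => insert (next ψ) (subf ψ)
  | untl a b => insert (untl a b) (subf a ∪ subf b)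
  | ctx C h ψ => insert (ctx C h ψ) (subf ψ)

/-- The size of a formula: its number of distinct subformulas. -/
noncomputable def size {AP V : Type} (ψ : HCQF AP V) : ℕ := ψ.subf.ncard

/-- Nesting depth of context modalities. -/
def ctxDepth {AP V : Type} : HCQF AP V → ℕ
  | tt => 0
  | atom _ _ => 0
  | neg ψ => ctxDepth ψ
  | conj a b => max (ctxDepth a) (ctxDepth b)
  | next ψ => ctxDepth ψ
  | untl a b => max (ctxDepth a) (ctxDepth b)
  | ctx _ _ ψ => ctxDepth ψ + 1

/-- Auxiliary predicate for the bounded fragment. `glob` is the set of all trace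
variables occurring in the formula of interest (a context `C` is global iff
`glob ⊆ C`); the flag records whether the current position is in the scope of a
non-global context modality, where only the temporal modality `X` is allowed. -/
def BoundedAux {AP V : Type} (glob : Set V) : Bool → HCQF AP V → Prop
  | _, tt => True
  | _, atom _ _ => True
  | t, neg ψ => BoundedAux glob t ψ
  | t, conj a b => BoundedAux glob t a ∧ BoundedAux glob t b
  | t, next ψ => BoundedAux glob t ψ
  | false, untl a b => BoundedAux glob false a ∧ BoundedAux glob false b
  | true, untl _ _ => False
  | t, ctx C _ ψ => (glob ⊆ C → BoundedAux glob false ψ) ∧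
                    (¬ glob ⊆ C → BoundedAux glob true ψ)

/-- `ψ` is bounded: the only temporal modality occurring in (the scope of) a
non-global context is the next modality `X`. -/
def IsBounded {AP V : Type} (ψ : HCQF AP V) : Prop := BoundedAux ψ.vars false ψ

/-- Auxiliary predicate for the fragment where each temporal modality occurring in
(the scope of) a non-global context is the eventually modality `F` (i.e. `⊤ U ·`). -/
def FOnlyAux {AP V : Type} (glob : Set V) : Bool → HCQF AP V → Prop
  | _, tt => True
  | _, atom _ _ => True
  | t, neg ψ => FOnlyAux glob t ψ
  | t, conj a b => FOnlyAux glob t a ∧ FOnlyAux glob t b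
  | false, next ψ => FOnlyAux glob false ψ
  | true, next _ => False
  | false, untl a b => FOnlyAux glob false a ∧ FOnlyAux glob false b
  | true, untl a b => a = tt ∧ FOnlyAux glob true b
  | t, ctx C _ ψ => (glob ⊆ C → FOnlyAux glob false ψ) ∧
                    (¬ glob ⊆ C → FOnlyAux glob true ψ)

/-- Every temporal modality occurring in the scope of a non-global context
modality is the eventually modality `F`. -/
def FOnlyInNonGlobal {AP V : Type} (glob : Set V) (ψ : HCQF AP V) : Prop :=
  FOnlyAux glob false ψ

end HCQF

/-- A HyperLTL_C sentence: a quantifier prefix and a quantifier-free matrix. -/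
structure HCSentence (AP V : Type) : Type where
  pre : List (Quant × V)
  matrix : HCQF AP V

/-- The sentence is closed: quantified variables are pairwise distinct and every
trace variable of the matrix is bound by the prefix. -/
def HCSentence.Closed {AP V : Type} (φ : HCSentence AP V) : Prop :=
  (φ.pre.map Prod.snd).Nodup ∧ ∀ x ∈ φ.matrix.vars, x ∈ φ.pre.map Prod.snd

/-- `L ⊨ φ` for a HyperLTL_C sentence `φ` and a set `L` of traces
(the matrix is evaluated in the global context `VAR`). -/
def HCSentence.Models {AP V : Type} [DecidableEq V] (φ : HCSentence AP V)
    (L : Set (Trace AP)) : Prop :=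
  ∀ Δ₀ : PTA AP V, SatPfx L φ.pre (fun Δ => φ.matrix.Sat Δ Set.univ) Δ₀

/-- An instance of Post's Correspondence Problem over the alphabet `A`:
`2 * n` nonempty finite words. -/
structure PCPInstance (A : Type) : Type where
  n : ℕ
  npos : 0 < n
  word : Fin 2 → Fin n → List A
  ne : ∀ (ℓ : Fin 2) (i : Fin n), word ℓ i ≠ []

/-- The PCP instance has a solution. -/
def PCPInstance.HasSolution {A : Type} (P : PCPInstance A) : Prop :=
  ∃ is : List (Fin P.n), is ≠ [] ∧
    (is.map (P.word 0)).flatten = (is.map (P.word 1)).flatten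

/-- Atomic propositions used in the PCP reduction:
`AP = Σ ∪ {#} ∪ {p₁,…,pₙ} ∪ {q₁,q₂}`. -/
inductive PCPAP (A : Type) (n : ℕ) : Type where
  | sym  : A → PCPAP A n
  | hash : PCPAP A n
  | pvar : Fin n → PCPAP A n
  | qvar : Fin 2 → PCPAP A n
deriving DecidableEq

/-- `[u, p_i, q_ℓ]` : the word `u` marked with `p_i` and `q_ℓ`, whose last letter is
additionally marked with `#`. -/
def markWord {A : Type} {n : ℕ} (i : Fin n) (ℓ : Fin 2) : List A → List (Set (PCPAP A n))
  | [] => []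
  | [a] => [{PCPAP.sym a, PCPAP.pvar i, PCPAP.qvar ℓ, PCPAP.hash}]
  | a :: b :: rest => ({PCPAP.sym a, PCPAP.pvar i, PCPAP.qvar ℓ} : Set (PCPAP A n)) ::
      markWord i ℓ (b :: rest)

/-- The trace consisting of the finite word `l` followed by the trace `tail`. -/
def listToTrace {A : Type} (l : List (Set A)) (tail : Trace A) : Trace A :=
  fun k => if h : k < l.length then l.get ⟨k, h⟩ else tail (k - l.length)

/-- The well-formed trace `π^ℓ_{i₁,…,i_k} = {#}·[u^ℓ_{i₁},p_{i₁},q_ℓ]⋯[u^ℓ_{i_k},p_{i_k},q_ℓ]·{#}^ω`. -/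
def wfTrace {A : Type} (P : PCPInstance A) (ℓ : Fin 2) (is : List (Fin P.n)) :
    Trace (PCPAP A P.n) :=
  listToTrace (({PCPAP.hash} : Set (PCPAP A P.n)) ::
      (is.map fun i => markWord i ℓ (P.word ℓ i)).flatten)
    (fun _ => {PCPAP.hash})

/-- A well-formed trace for the PCP instance `P`. -/
def IsWellFormed {A : Type} (P : PCPInstance A) (π : Trace (PCPAP A P.n)) : Prop :=
  ∃ (ℓ : Fin 2) (is : List (Fin P.n)), is ≠ [] ∧ π = wfTrace P ℓ is

/-- The set `Γ = {#, p₁, …, pₙ}` of atomic propositions. -/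
def pcpGammaProp (A : Type) (n : ℕ) : Set (PCPAP A n) :=
  {x | x = PCPAP.hash ∨ ∃ i : Fin n, x = PCPAP.pvar i}

/-- The set `Γ = {#, p₁, …, pₙ}` regarded as a set of LTL formulas. -/
def pcpGammaLTL (A : Type) (n : ℕ) : Set (LTL (PCPAP A n)) :=
  LTL.atom '' pcpGammaProp A n

/-- The set `Γ = {#, p₁, …, pₙ}` as a finite set of LTL formulas. -/
def pcpGammaFinset (A : Type) [DecidableEq A] (n : ℕ) : Finset (LTL (PCPAP A n)) :=
  insert (LTL.atom PCPAP.hash)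
    ((Finset.univ : Finset (Fin n)).image fun i => LTL.atom (PCPAP.pvar i))

/-- Instructions of a Minsky 2-counter machine. -/
inductive MOp : Type where
  | inc  : MOp
  | dec  : MOp
  | zero : MOp
deriving DecidableEq

/-- A Minsky 2-counter machine (locations are `Fin nQ`; no transition leaves the
halting location). -/
structure Minsky : Type where
  nQ : ℕ
  qinit : Fin nQ
  qhalt : Fin nQ
  trans : Set (Fin nQ × (MOp × Fin 2) × Fin nQ)
  halt_no_out : ∀ q op q', (q, op, q') ∈ trans → q ≠ qhalt

/-- The one-step relation between configurations of a Minsky machine. -/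
def Minsky.Step (M : Minsky) (c c' : Fin M.nQ × (Fin 2 → ℕ)) : Prop :=
  ∃ (op : MOp) (cnt : Fin 2), (c.1, (op, cnt), c'.1) ∈ M.trans ∧
    (∀ d : Fin 2, d ≠ cnt → c'.2 d = c.2 d) ∧
    (match op with
      | MOp.inc => c'.2 cnt = c.2 cnt + 1
      | MOp.dec => 0 < c.2 cnt ∧ c'.2 cnt + 1 = c.2 cnt
      | MOp.zero => c.2 cnt = 0 ∧ c'.2 cnt = 0)

/-- The machine halts: some computation from the initial configuration reaches the
halting location. -/
def Minsky.Halts (M : Minsky) : Prop :=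
  ∃ c : Fin M.nQ × (Fin 2 → ℕ),
    Relation.ReflTransGen M.Step (M.qinit, fun _ => 0) c ∧ c.1 = M.qhalt

/-- Projection of a trace over `AP ⊕ B` onto `AP`. -/
def projSum {AP B : Type} (w : Trace (AP ⊕ B)) : Trace AP :=
  fun i => {p | Sum.inl p ∈ w i}

/-- The proposition `at(θ)` associated with an LTL formula (`at(p) = p` for atoms). -/
def atProp {AP : Type} : LTL AP → AP ⊕ LTL AP
  | LTL.atom p => Sum.inl p
  | θ => Sum.inr θ

section AuxStutter

variable {A : Type} {n : ℕ}

/-- Γ-prop equivalence of two positions of a trace. -/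
def DEq (π : Trace (PCPAP A n)) (h k : ℕ) : Prop :=
  ∀ p ∈ pcpGammaProp A n, (p ∈ π h ↔ p ∈ π k)

lemma DEq.refl (π : Trace (PCPAP A n)) (h : ℕ) : DEq π h h := fun _ _ => Iff.rfl

lemma DEq.of_eq {π : Trace (PCPAP A n)} {h k : ℕ} (e : π h = π k) : DEq π h k := by
  intro p _; rw [e]

lemma DEq.symm' {π : Trace (PCPAP A n)} {h k : ℕ} (d : DEq π h k) : DEq π k h :=
  fun p hp => (d p hp).symm

lemma DEq.trans' {π : Trace (PCPAP A n)} {h k l : ℕ} (d : DEq π h k) (e : DEq π k l) :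
    DEq π h l := fun p hp => (d p hp).trans (e p hp)

lemma profDiff_iff (π : Trace (PCPAP A n)) (h k : ℕ) :
    profDiff (pcpGammaLTL A n) π h k ↔ ¬ DEq π h k := by
  constructor
  · rintro ⟨θ, hθ, hne⟩ hd
    obtain ⟨p, hp, rfl⟩ := hθ
    exact hne (hd p hp)
  · intro hd
    rw [DEq] at hd
    rcases not_forall.1 hd with ⟨p, hp2⟩
    rcases Classical.not_imp.1 hp2 with ⟨hp, hne⟩
    exact ⟨LTL.atom p, ⟨p, hp, rfl⟩, hne⟩

lemma succPos_eq_of {π : Trace (PCPAP A n)} {i j : ℕ} (hij : i < j)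
    (hdiff : ¬ DEq π i j) (hconst : ∀ l, i < l → l < j → DEq π i l) :
    succPos (pcpGammaLTL A n) π i = j := by
  have hex : ∃ l, i < l ∧ profDiff (pcpGammaLTL A n) π i l :=
    ⟨j, hij, (profDiff_iff _ _ _).2 hdiff⟩
  rw [succPos, dif_pos hex, Nat.find_eq_iff]
  refine ⟨⟨hij, (profDiff_iff _ _ _).2 hdiff⟩, ?_⟩
  rintro l hl ⟨hil, hpd⟩
  exact (profDiff_iff _ _ _).1 hpd (hconst l hil hl)

lemma succPos_eq_succ_of {π : Trace (PCPAP A n)} {i : ℕ}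
    (hconst : ∀ l, i < l → DEq π i l) :
    succPos (pcpGammaLTL A n) π i = i + 1 := by
  rw [succPos, dif_neg]
  rintro ⟨l, hil, hpd⟩
  exact (profDiff_iff _ _ _).1 hpd (hconst l hil)

lemma stfrNth_char {π : Trace (PCPAP A n)} {m : ℕ} {t : ℕ → ℕ}
    (ht0 : t 0 = 0)
    (hmono : ∀ j, j < m → t j < t (j+1))
    (hseg : ∀ j, j < m → ∀ h, t j ≤ h → h < t (j+1) → DEq π (t j) h)
    (htail : ∀ h, t m ≤ h → DEq π (t m) h)
    (hdiff : ∀ j, j < m → ¬ DEq π (t j) (t (j+1))) :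
    ∀ k, stfrNth (pcpGammaLTL A n) π k = if k ≤ m then t k else t m + (k - m) := by
  intro k
  induction k with
  | zero => simpa [stfrNth] using ht0.symm
  | succ k ih =>
    rw [show stfrNth (pcpGammaLTL A n) π (k+1)
        = succPos (pcpGammaLTL A n) π (stfrNth (pcpGammaLTL A n) π k) from rfl, ih]
    rcases lt_trichotomy k m with hk | hk | hk
    · rw [if_pos hk.le, if_pos (show k + 1 ≤ m from hk)]
      exact succPos_eq_of (hmono k hk) (hdiff k hk)
        (fun l h1 h2 => hseg k hk l (le_of_lt h1) h2)
    · subst hk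
      rw [if_pos le_rfl, if_neg (by omega)]
      rw [succPos_eq_succ_of (fun l hl => htail l hl.le)]
      omega
    · rw [if_neg (show ¬ k ≤ m by omega), if_neg (show ¬ k + 1 ≤ m by omega)]
      have h1 : t m ≤ t m + (k - m) := Nat.le_add_right _ _
      rw [succPos_eq_succ_of (fun l hl =>
        ((htail _ h1).symm').trans' (htail l (le_trans h1 hl.le)))]
      omega

lemma stfr_mem_char {π : Trace (PCPAP A n)} {m : ℕ} {t : ℕ → ℕ}
    (ht0 : t 0 = 0)
    (hmono : ∀ j, j < m → t j < t (j+1))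
    (hseg : ∀ j, j < m → ∀ h, t j ≤ h → h < t (j+1) → DEq π (t j) h)
    (htail : ∀ h, t m ≤ h → DEq π (t m) h)
    (hdiff : ∀ j, j < m → ¬ DEq π (t j) (t (j+1)))
    (k : ℕ) (p : PCPAP A n) (hp : p ∈ pcpGammaProp A n) :
    (p ∈ stfr (pcpGammaLTL A n) π k ↔ p ∈ π (t (min k m))) := by
  rw [stfr, stfrNth_char ht0 hmono hseg htail hdiff k]
  by_cases hk : k ≤ m
  · rw [if_pos hk, min_eq_left hk]
  · rw [if_neg hk, min_eq_right (le_of_not_ge hk)]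
    exact ((htail _ (Nat.le_add_right _ _)) p hp).symm

end AuxStutter
section AuxList

variable {A : Type} {n : ℕ}

/-- The value of a position of a marked word. -/
def mset (i : Fin n) (ℓ : Fin 2) (a : A) (b : Bool) : Set (PCPAP A n) :=
  if b then {PCPAP.sym a, PCPAP.pvar i, PCPAP.qvar ℓ, PCPAP.hash}
  else {PCPAP.sym a, PCPAP.pvar i, PCPAP.qvar ℓ}

lemma mem_mset {i : Fin n} {ℓ : Fin 2} {a : A} {b : Bool} {x : PCPAP A n} :
    x ∈ mset i ℓ a b ↔
      (x = PCPAP.sym a ∨ x = PCPAP.pvar i ∨ x = PCPAP.qvar ℓ ∨ (b = true ∧ x = PCPAP.hash)) := by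
  cases b <;> simp [mset, Set.mem_insert_iff, Set.mem_singleton_iff]

lemma markWord_length (i : Fin n) (ℓ : Fin 2) :
    ∀ u : List A, (markWord i ℓ u).length = u.length
  | [] => rfl
  | [a] => rfl
  | a :: b :: rest => by
      simp only [markWord, List.length_cons]
      rw [markWord_length i ℓ (b :: rest)]
      simp

lemma markWord_getElem? (i : Fin n) (ℓ : Fin 2) :
    ∀ (u : List A) (o : ℕ) (ho : o < u.length),
      (markWord i ℓ u)[o]? = some (mset i ℓ (u[o]'ho) (decide (o + 1 = u.length)))
  | [], o, ho => by simp at ho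
  | [a], 0, ho => by simp [markWord, mset]
  | [a], (o+1), ho => by simp at ho
  | a :: b :: rest, 0, ho => by
      have : ¬ (0 + 1 = (a :: b :: rest).length) := by
        simp only [List.length_cons]; omega
      simp only [markWord, List.getElem?_cons_zero, List.getElem_cons_zero,
        decide_eq_false this]
      simp [mset]
  | a :: b :: rest, (o+1), ho => by
      have ho' : o < (b :: rest).length := by
        simpa using Nat.lt_of_succ_lt_succ ho
      have h1 : (markWord i ℓ (a :: b :: rest))[o+1]? = (markWord i ℓ (b :: rest))[o]? := by
        simp only [markWord, List.getElem?_cons_succ]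
      rw [h1, markWord_getElem? i ℓ (b :: rest) o ho']
      have h2 : (a :: b :: rest)[o+1]'ho = (b :: rest)[o]'ho' := by simp
      have h3 : (decide (o + 1 + 1 = (a :: b :: rest).length))
          = (decide (o + 1 = (b :: rest).length)) := by
        simp only [decide_eq_decide, List.length_cons]; omega
      rw [h2, h3]

lemma flatten_getElem? {α : Type} :
    ∀ (ls : List (List α)) (r : ℕ) (hr : r < ls.length) (o : ℕ),
      o < (ls[r]'hr).length →
      ls.flatten[((ls.map List.length).take r).sum + o]? = (ls[r]'hr)[o]?
  | [], r, hr, _, _ => by simp at hr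
  | l :: ls, 0, hr, o, ho => by
      simp only [List.take_zero, List.sum_nil, Nat.zero_add, List.flatten_cons,
        List.getElem_cons_zero] at *
      rw [List.getElem?_append, if_pos ho]
  | l :: ls, r+1, hr, o, ho => by
      simp only [List.map_cons, List.take_succ_cons, List.sum_cons, List.flatten_cons,
        List.getElem_cons_succ] at *
      rw [Nat.add_assoc, List.getElem?_append_right (Nat.le_add_right _ _),
        Nat.add_sub_cancel_left]
      exact flatten_getElem? ls r (by simpa using hr) o ho

lemma flatten_decomp {α : Type} :
    ∀ (ls : List (List α)) (o : ℕ), o < (ls.map List.length).sum →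
      ∃ r, ∃ hr : r < ls.length, ∃ p, p < (ls[r]'hr).length ∧
        o = ((ls.map List.length).take r).sum + p
  | [], o, ho => by simp at ho
  | l :: ls, o, ho => by
      by_cases h : o < l.length
      · exact ⟨0, by simp, o, by simpa using h, by simp⟩
      · push_neg at h
        obtain ⟨r, hr, p, hp, he⟩ := flatten_decomp ls (o - l.length) (by
          simp only [List.map_cons, List.sum_cons] at ho; omega)
        refine ⟨r+1, by simpa using hr, p, by simpa using hp, ?_⟩
        simp only [List.map_cons, List.take_succ_cons, List.sum_cons]
        omega

end AuxList
section AuxWf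

variable {A : Type} (P : PCPInstance A) (ℓ : Fin 2) (is : List (Fin P.n))

/-- Prefix sums of word lengths. -/
def bsum (r : ℕ) : ℕ := ((is.map fun i => (P.word ℓ i).length).take r).sum

lemma bsum_zero : bsum P ℓ is 0 = 0 := rfl

lemma bsum_succ (r : ℕ) (hr : r < is.length) :
    bsum P ℓ is (r+1) = bsum P ℓ is r + (P.word ℓ (is[r]'hr)).length := by
  unfold bsum
  rw [List.sum_take_succ _ r (by simpa using hr)]
  congr 1
  simp

lemma bsum_top : bsum P ℓ is is.length = ((is.map fun i => (P.word ℓ i).length)).sum := by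
  unfold bsum
  conv_lhs => rw [show is.length = (is.map fun i => (P.word ℓ i).length).length by simp]
  rw [List.take_length]

/-- The list of marked blocks. -/
def blocks : List (List (Set (PCPAP A P.n))) := is.map fun i => markWord i ℓ (P.word ℓ i)

lemma blocks_length : (blocks P ℓ is).length = is.length := by simp [blocks]

lemma blocks_getElem (r : ℕ) (hr : r < is.length) :
    (blocks P ℓ is)[r]'(by rw [blocks_length]; exact hr)
      = markWord (is[r]'hr) ℓ (P.word ℓ (is[r]'hr)) := by
  simp [blocks]

lemma blocks_map_length :
    (blocks P ℓ is).map List.length = is.map fun i => (P.word ℓ i).length := by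
  unfold blocks
  rw [List.map_map]
  apply List.map_congr_left
  intro i _
  simp [Function.comp, markWord_length]

lemma listToTrace_of_getElem? {B : Type} {l : List (Set B)} {tail : Trace B} {k : ℕ}
    {s : Set B} (h : l[k]? = some s) : listToTrace l tail k = s := by
  have hk : k < l.length := by
    by_contra hk
    rw [List.getElem?_eq_none (le_of_not_gt hk)] at h
    exact absurd h (by simp)
  rw [listToTrace, dif_pos hk]
  rw [List.getElem?_eq_getElem hk] at h
  simpa using Option.some.inj h

lemma listToTrace_tail {B : Type} {l : List (Set B)} {tail : Trace B} {k : ℕ}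
    (h : l.length ≤ k) : listToTrace l tail k = tail (k - l.length) := by
  rw [listToTrace, dif_neg (not_lt.2 h)]

lemma wfTrace_zero : wfTrace P ℓ is 0 = {PCPAP.hash} := by
  rw [wfTrace]
  exact listToTrace_of_getElem? (by simp)

lemma wfTrace_len :
    (({PCPAP.hash} : Set (PCPAP A P.n)) ::
      (is.map fun i => markWord i ℓ (P.word ℓ i)).flatten).length
      = 1 + bsum P ℓ is is.length := by
  rw [List.length_cons, List.length_flatten,
    show (is.map fun i => markWord i ℓ (P.word ℓ i)) = blocks P ℓ is from rfl,
    blocks_map_length, bsum_top]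
  omega

lemma wfTrace_tail (h : ℕ) (hh : 1 + bsum P ℓ is is.length ≤ h) :
    wfTrace P ℓ is h = {PCPAP.hash} := by
  rw [wfTrace, listToTrace_tail (by rw [wfTrace_len]; exact hh)]

lemma wfTrace_block (r : ℕ) (hr : r < is.length) (o : ℕ)
    (ho : o < (P.word ℓ (is[r]'hr)).length) :
    wfTrace P ℓ is (1 + bsum P ℓ is r + o) =
      mset (is[r]'hr) ℓ ((P.word ℓ (is[r]'hr))[o]'ho)
        (decide (o + 1 = (P.word ℓ (is[r]'hr)).length)) := by
  rw [wfTrace]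
  apply listToTrace_of_getElem?
  rw [show 1 + bsum P ℓ is r + o = (bsum P ℓ is r + o) + 1 by omega,
    List.getElem?_cons_succ]
  have hr' : r < (blocks P ℓ is).length := by rw [blocks_length]; exact hr
  have ho' : o < ((blocks P ℓ is)[r]'hr').length := by
    rw [blocks_getElem, markWord_length]; exact ho
  have h1 := flatten_getElem? (blocks P ℓ is) r hr' o ho'
  rw [blocks_map_length] at h1
  rw [show (is.map fun i => markWord i ℓ (P.word ℓ i)) = blocks P ℓ is from rfl]
  rw [show bsum P ℓ is r + o = ((is.map fun i => (P.word ℓ i).length).take r).sum + o from rfl,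
    h1]
  have h2 : (blocks P ℓ is)[r]'hr' = markWord (is[r]'hr) ℓ (P.word ℓ (is[r]'hr)) :=
    blocks_getElem P ℓ is r hr
  rw [show ((blocks P ℓ is)[r]'hr')[o]? = (markWord (is[r]'hr) ℓ (P.word ℓ (is[r]'hr)))[o]?
      by rw [h2]]
  exact markWord_getElem? _ _ _ o ho

lemma wfTrace_mem_cases (h : ℕ) :
    wfTrace P ℓ is h = {PCPAP.hash} ∨
      ∃ r, ∃ hr : r < is.length, ∃ o, ∃ ho : o < (P.word ℓ (is[r]'hr)).length,
        h = 1 + bsum P ℓ is r + o ∧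
        wfTrace P ℓ is h = mset (is[r]'hr) ℓ ((P.word ℓ (is[r]'hr))[o]'ho)
          (decide (o + 1 = (P.word ℓ (is[r]'hr)).length)) := by
  rcases Nat.eq_zero_or_pos h with h0 | hpos
  · left; rw [h0]; exact wfTrace_zero P ℓ is
  by_cases htail : 1 + bsum P ℓ is is.length ≤ h
  · left; exact wfTrace_tail P ℓ is h htail
  right
  push_neg at htail
  have hd : h - 1 < ((blocks P ℓ is).map List.length).sum := by
    rw [blocks_map_length, ← bsum_top]
    omega
  obtain ⟨r, hr, o, ho, he⟩ := flatten_decomp _ _ hd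
  have hr2 : r < is.length := by rw [← blocks_length P ℓ is]; exact hr
  have ho2 : o < (P.word ℓ (is[r]'hr2)).length := by
    rw [← markWord_length (is[r]'hr2) ℓ, ← blocks_getElem]; exact ho
  have he2 : h = 1 + bsum P ℓ is r + o := by
    rw [blocks_map_length] at he
    have : h - 1 = bsum P ℓ is r + o := he
    omega
  exact ⟨r, hr2, o, ho2, he2, by rw [he2]; exact wfTrace_block P ℓ is r hr2 o ho2⟩

lemma wfTrace_sym (h : ℕ) (a : A) :
    PCPAP.sym a ∈ wfTrace P ℓ is h ↔
      (1 ≤ h ∧ ((is.map (P.word ℓ)).flatten)[h-1]? = some a) := by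
  have hml : (is.map (P.word ℓ)).map List.length = is.map fun i => (P.word ℓ i).length := by
    rw [List.map_map]; rfl
  constructor
  · intro hmem
    rcases wfTrace_mem_cases P ℓ is h with he | ⟨r, hr, o, ho, he, hv⟩
    · rw [he] at hmem
      exact absurd hmem (by simp)
    · rw [hv, mem_mset] at hmem
      have ha : (P.word ℓ (is[r]'hr))[o]'ho = a := by
        rcases hmem with h1 | h1 | h1 | ⟨_, h1⟩
        · exact (PCPAP.sym.inj h1).symm
        · exact absurd h1 (by simp)
        · exact absurd h1 (by simp)
        · exact absurd h1 (by simp)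
      have hr' : r < (is.map (P.word ℓ)).length := by simpa using hr
      have ho' : o < ((is.map (P.word ℓ))[r]'hr').length := by simpa using ho
      have hflat := flatten_getElem? (is.map (P.word ℓ)) r hr' o ho'
      rw [hml, List.getElem_map] at hflat
      refine ⟨by omega, ?_⟩
      rw [show h - 1 = ((is.map fun i => (P.word ℓ i).length).take r).sum + o from by
        have hb : bsum P ℓ is r = ((is.map fun i => (P.word ℓ i).length).take r).sum := rfl
        omega, hflat, List.getElem?_eq_getElem ho]
      exact congrArg some ha
  · rintro ⟨h1, h2⟩
    have hlt : h - 1 < ((is.map (P.word ℓ)).map List.length).sum := by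
      rw [← List.length_flatten]
      by_contra hc
      rw [List.getElem?_eq_none (le_of_not_gt hc)] at h2
      exact absurd h2 (by simp)
    obtain ⟨r, hr, o, ho, he⟩ := flatten_decomp (is.map (P.word ℓ)) (h-1) hlt
    have hr2 : r < is.length := by simpa using hr
    have hflat := flatten_getElem? (is.map (P.word ℓ)) r hr o ho
    rw [List.getElem_map] at ho
    rw [hml] at he hflat
    rw [List.getElem_map] at hflat
    rw [he, hflat, List.getElem?_eq_getElem ho] at h2
    have ha := Option.some.inj h2
    have he2 : h = 1 + bsum P ℓ is r + o := by
      have hb : bsum P ℓ is r = ((is.map fun i => (P.word ℓ i).length).take r).sum := rfl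
      omega
    rw [he2, wfTrace_block P ℓ is r hr2 o ho, mem_mset]
    left
    exact (congrArg PCPAP.sym ha).symm

end AuxWf
section AuxT

variable {A : Type} (P : PCPInstance A) (ℓ : Fin 2) (is : List (Fin P.n))

/-- Positions of the Γ-stutter factorization of a well-formed trace. -/
def tfun (j : ℕ) : ℕ :=
  if j = 0 then 0
  else if j % 2 = 1 then 1 + bsum P ℓ is (j / 2)
  else bsum P ℓ is (j / 2)

lemma tfun_zero : tfun P ℓ is 0 = 0 := by simp [tfun]

lemma tfun_odd (r : ℕ) : tfun P ℓ is (2*r+1) = 1 + bsum P ℓ is r := by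
  have h1 : (2*r+1) % 2 = 1 := by omega
  have h2 : (2*r+1) / 2 = r := by omega
  simp [tfun, h1, h2]

lemma tfun_even (r : ℕ) : tfun P ℓ is (2*r+2) = bsum P ℓ is (r+1) := by
  have h0 : ¬ (2*r+2 = 0) := by omega
  have h1 : ¬ ((2*r+2) % 2 = 1) := by omega
  have h2 : (2*r+2) / 2 = r + 1 := by omega
  simp [tfun, h0, h1, h2]

/-- The Γ-values of the stutter factorization of a well-formed trace, as a predicate;
it depends only on the index sequence. -/
def tval {A : Type} {n : ℕ} (is : List (Fin n)) (j : ℕ) (p : PCPAP A n) : Prop :=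
  if j = 0 ∨ j = 2 * is.length + 1 then p = PCPAP.hash
  else if j % 2 = 1 then ∃ hr : j/2 < is.length, p = PCPAP.pvar (is[j/2]'hr)
  else ∃ hr : j/2 - 1 < is.length, p = PCPAP.hash ∨ p = PCPAP.pvar (is[j/2-1]'hr)

lemma tval_zero {A : Type} {n : ℕ} (is : List (Fin n)) (p : PCPAP A n) :
    tval is 0 p ↔ p = PCPAP.hash := by simp [tval]

lemma tval_top {A : Type} {n : ℕ} (is : List (Fin n)) (p : PCPAP A n) :
    tval is (2 * is.length + 1) p ↔ p = PCPAP.hash := by simp [tval]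

lemma tval_odd {A : Type} {n : ℕ} (is : List (Fin n)) (r : ℕ) (hr : r < is.length)
    (p : PCPAP A n) :
    tval is (2*r+1) p ↔ p = PCPAP.pvar (is[r]'hr) := by
  have h0 : ¬ (2*r+1 = 0 ∨ 2*r+1 = 2*is.length+1) := by omega
  have h1 : (2*r+1) % 2 = 1 := by omega
  have h2 : (2*r+1) / 2 = r := by omega
  simp only [tval, if_neg h0, if_pos h1, h2]
  exact ⟨fun h' => Exists.elim h' (fun _ he => he), fun he => ⟨hr, he⟩⟩

lemma tval_even {A : Type} {n : ℕ} (is : List (Fin n)) (r : ℕ) (hr : r < is.length)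
    (p : PCPAP A n) :
    tval is (2*r+2) p ↔ (p = PCPAP.hash ∨ p = PCPAP.pvar (is[r]'hr)) := by
  have h0 : ¬ (2*r+2 = 0 ∨ 2*r+2 = 2*is.length+1) := by omega
  have h1 : ¬ ((2*r+2) % 2 = 1) := by omega
  have h2 : (2*r+2) / 2 - 1 = r := by omega
  simp only [tval, if_neg h0, if_neg h1, h2]
  exact ⟨fun h' => Exists.elim h' (fun _ he => he), fun he => ⟨hr, he⟩⟩

lemma DEq_mset {n : ℕ} {π : Trace (PCPAP A n)} {h1 h2 : ℕ} {i : Fin n} {ℓ' : Fin 2}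
    {a1 a2 : A} {b : Bool}
    (e1 : π h1 = mset i ℓ' a1 b) (e2 : π h2 = mset i ℓ' a2 b) : DEq π h1 h2 := by
  intro p hp
  have hp' : p = PCPAP.hash ∨ ∃ j, p = PCPAP.pvar j := hp
  rw [e1, e2]
  rcases hp' with hp' | ⟨j, hp'⟩ <;> subst hp' <;> simp [mem_mset]

lemma wf_mid (hlen : ∀ (ℓ : Fin 2) (i : Fin P.n), 2 ≤ (P.word ℓ i).length)
    (r : ℕ) (hr : r < is.length) (o : ℕ) (ho : o + 1 < (P.word ℓ (is[r]'hr)).length) :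
    wfTrace P ℓ is (1 + bsum P ℓ is r + o) =
      mset (is[r]'hr) ℓ ((P.word ℓ (is[r]'hr))[o]'(by omega)) false := by
  rw [wfTrace_block P ℓ is r hr o (by omega),
    decide_eq_false (by omega : ¬ (o + 1 = (P.word ℓ (is[r]'hr)).length))]

lemma wf_start (hlen : ∀ (ℓ : Fin 2) (i : Fin P.n), 2 ≤ (P.word ℓ i).length)
    (r : ℕ) (hr : r < is.length) :
    wfTrace P ℓ is (1 + bsum P ℓ is r) =
      mset (is[r]'hr) ℓ
        ((P.word ℓ (is[r]'hr))[0]'(by have := hlen ℓ (is[r]'hr); omega)) false := by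
  have := wf_mid P ℓ is hlen r hr 0 (by have := hlen ℓ (is[r]'hr); omega)
  rw [show 1 + bsum P ℓ is r + 0 = 1 + bsum P ℓ is r by omega] at this
  exact this

lemma wf_end (hlen : ∀ (ℓ : Fin 2) (i : Fin P.n), 2 ≤ (P.word ℓ i).length)
    (r : ℕ) (hr : r < is.length) :
    wfTrace P ℓ is (bsum P ℓ is (r+1)) =
      mset (is[r]'hr) ℓ
        ((P.word ℓ (is[r]'hr))[(P.word ℓ (is[r]'hr)).length - 1]'
          (by have := hlen ℓ (is[r]'hr); omega)) true := by
  have h2 := hlen ℓ (is[r]'hr)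
  have hb := bsum_succ P ℓ is r hr
  have := wfTrace_block P ℓ is r hr ((P.word ℓ (is[r]'hr)).length - 1) (by omega)
  rw [show 1 + bsum P ℓ is r + ((P.word ℓ (is[r]'hr)).length - 1) = bsum P ℓ is (r+1)
    by omega] at this
  rw [this,
    decide_eq_true (show ((P.word ℓ (is[r]'hr)).length - 1) + 1 = (P.word ℓ (is[r]'hr)).length
      by omega)]

lemma wf_tval (hlen : ∀ (ℓ : Fin 2) (i : Fin P.n), 2 ≤ (P.word ℓ i).length)
    (hne : is ≠ []) (j : ℕ) (hj : j ≤ 2 * is.length + 1) (p : PCPAP A P.n)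
    (hp : p ∈ pcpGammaProp A P.n) :
    (p ∈ wfTrace P ℓ is (tfun P ℓ is j) ↔ tval is j p) := by
  have hp' : p = PCPAP.hash ∨ ∃ i, p = PCPAP.pvar i := hp
  have hk : 0 < is.length := List.length_pos_iff.2 hne
  rcases Nat.eq_zero_or_pos j with rfl | hjp
  · rw [tfun_zero, wfTrace_zero, tval_zero]
    simp
  by_cases hjm : j = 2 * is.length + 1
  · subst hjm
    rw [show 2 * is.length + 1 = 2 * is.length + 1 from rfl, tfun_odd,
      wfTrace_tail P ℓ is _ le_rfl, tval_top]
    simp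
  obtain ⟨r, hr | hr⟩ : ∃ r, j = 2*r+1 ∨ j = 2*r+2 := ⟨(j-1)/2, by omega⟩
  · subst hr
    have hrk : r < is.length := by omega
    rw [tfun_odd, wf_start P ℓ is hlen r hrk, tval_odd is r hrk]
    rcases hp' with hp' | ⟨i', hp'⟩ <;> subst hp' <;> simp [mem_mset]
  · subst hr
    have hrk : r < is.length := by omega
    rw [tfun_even, wf_end P ℓ is hlen r hrk, tval_even is r hrk]
    rcases hp' with hp' | ⟨i', hp'⟩ <;> subst hp' <;> simp [mem_mset]

lemma wf_stfr_mem (hlen : ∀ (ℓ : Fin 2) (i : Fin P.n), 2 ≤ (P.word ℓ i).length)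
    (hne : is ≠ []) (h : ℕ) (p : PCPAP A P.n) (hp : p ∈ pcpGammaProp A P.n) :
    (p ∈ stfr (pcpGammaLTL A P.n) (wfTrace P ℓ is) h ↔
      tval is (min h (2 * is.length + 1)) p) := by
  have hk : 0 < is.length := List.length_pos_iff.2 hne
  have hpar : ∀ j : ℕ, 0 < j → ∃ r, j = 2*r+1 ∨ j = 2*r+2 :=
    fun j hj => ⟨(j-1)/2, by omega⟩
  have hmono : ∀ j, j < 2 * is.length + 1 → tfun P ℓ is j < tfun P ℓ is (j+1) := by
    intro j hj
    rcases Nat.eq_zero_or_pos j with rfl | hjp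
    · rw [tfun_zero, show (0:ℕ)+1 = 2*0+1 by rfl, tfun_odd]
      omega
    obtain ⟨r, hr | hr⟩ := hpar j hjp
    · subst hr
      have hrk : r < is.length := by omega
      have h2 := hlen ℓ (is[r]'hrk)
      have hb := bsum_succ P ℓ is r hrk
      rw [tfun_odd, show 2*r+1+1 = 2*r+2 by rfl, tfun_even]
      omega
    · subst hr
      rw [tfun_even, show 2*r+2+1 = 2*(r+1)+1 by rfl, tfun_odd]
      omega
  have hseg : ∀ j, j < 2 * is.length + 1 → ∀ x, tfun P ℓ is j ≤ x →
      x < tfun P ℓ is (j+1) → DEq (wfTrace P ℓ is) (tfun P ℓ is j) x := by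
    intro j hj x hx1 hx2
    rcases Nat.eq_zero_or_pos j with rfl | hjp
    · rw [tfun_zero] at hx1 ⊢
      rw [show (0:ℕ)+1 = 2*0+1 by rfl, tfun_odd, bsum_zero] at hx2
      rw [show x = 0 by omega]
      exact DEq.refl _ _
    obtain ⟨r, hr | hr⟩ := hpar j hjp
    · subst hr
      have hrk : r < is.length := by omega
      have h2 := hlen ℓ (is[r]'hrk)
      have hb := bsum_succ P ℓ is r hrk
      rw [tfun_odd] at hx1 ⊢
      rw [show 2*r+1+1 = 2*r+2 by rfl, tfun_even] at hx2
      have ho : (x - (1 + bsum P ℓ is r)) + 1 < (P.word ℓ (is[r]'hrk)).length := by omega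
      have e1 := wf_start P ℓ is hlen r hrk
      have e2 := wf_mid P ℓ is hlen r hrk _ ho
      rw [show x = 1 + bsum P ℓ is r + (x - (1 + bsum P ℓ is r)) by omega]
      exact DEq_mset e1 e2
    · subst hr
      rw [tfun_even] at hx1 ⊢
      rw [show 2*r+2+1 = 2*(r+1)+1 by rfl, tfun_odd] at hx2
      rw [show x = bsum P ℓ is (r+1) by omega]
      exact DEq.refl _ _
  have htail : ∀ x, tfun P ℓ is (2 * is.length + 1) ≤ x →
      DEq (wfTrace P ℓ is) (tfun P ℓ is (2 * is.length + 1)) x := by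
    intro x hx
    rw [tfun_odd] at hx ⊢
    exact DEq.of_eq (by rw [wfTrace_tail P ℓ is _ le_rfl, wfTrace_tail P ℓ is x hx])
  have hdiff : ∀ j, j < 2 * is.length + 1 →
      ¬ DEq (wfTrace P ℓ is) (tfun P ℓ is j) (tfun P ℓ is (j+1)) := by
    intro j hj hD
    rcases Nat.eq_zero_or_pos j with rfl | hjp
    · have e1 := wfTrace_zero P ℓ is
      have e2 := wf_start P ℓ is hlen 0 hk
      have hh := hD PCPAP.hash (show _ ∈ pcpGammaProp A P.n from Or.inl rfl)
      rw [tfun_zero, show (0:ℕ)+1 = 2*0+1 by rfl, tfun_odd] at hh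
      rw [e1, e2] at hh
      simp [mem_mset] at hh
    obtain ⟨r, hr | hr⟩ := hpar j hjp
    · subst hr
      have hrk : r < is.length := by omega
      have e1 := wf_start P ℓ is hlen r hrk
      have e2 := wf_end P ℓ is hlen r hrk
      have hh := hD PCPAP.hash (show _ ∈ pcpGammaProp A P.n from Or.inl rfl)
      rw [tfun_odd, show 2*r+1+1 = 2*r+2 by rfl, tfun_even] at hh
      rw [e1, e2] at hh
      simp [mem_mset] at hh
    · subst hr
      have hrk : r < is.length := by omega
      have e1 := wf_end P ℓ is hlen r hrk
      by_cases hrk2 : r + 1 < is.length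
      · have e2 := wf_start P ℓ is hlen (r+1) hrk2
        have hh := hD PCPAP.hash (show _ ∈ pcpGammaProp A P.n from Or.inl rfl)
        rw [tfun_even, show 2*r+2+1 = 2*(r+1)+1 by rfl, tfun_odd] at hh
        rw [e1, e2] at hh
        simp [mem_mset] at hh
      · have hr1 : r + 1 = is.length := by omega
        have e2 : wfTrace P ℓ is (1 + bsum P ℓ is (r+1)) = {PCPAP.hash} := by
          rw [hr1]
          exact wfTrace_tail P ℓ is _ le_rfl
        have hh := hD (PCPAP.pvar (is[r]'hrk))
          (show _ ∈ pcpGammaProp A P.n from Or.inr ⟨is[r]'hrk, rfl⟩)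
        rw [tfun_even, show 2*r+2+1 = 2*(r+1)+1 by rfl, tfun_odd] at hh
        rw [e1, e2] at hh
        simp [mem_mset] at hh
  have key := stfr_mem_char (tfun_zero P ℓ is) hmono hseg htail hdiff h p hp
  rw [key]
  exact wf_tval P ℓ is hlen hne _ (min_le_right _ _) p hp

end AuxT
theorem stmt5 (A : Type) [Fintype A] (P : PCPInstance A)
    (hlen : ∀ (ℓ : Fin 2) (i : Fin P.n), 2 ≤ (P.word ℓ i).length) :
    P.HasSolution ↔
      ∃ π₁ π₂ : Trace (PCPAP A P.n), IsWellFormed P π₁ ∧ IsWellFormed P π₂ ∧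
        (∀ h : ℕ, PCPAP.qvar 1 ∉ π₁ h) ∧ (∀ h : ℕ, PCPAP.qvar 0 ∉ π₂ h) ∧
        (∀ (h : ℕ) (a : A), PCPAP.sym a ∈ π₁ h ↔ PCPAP.sym a ∈ π₂ h) ∧
        (∀ (h : ℕ) (p : PCPAP A P.n), p ∈ pcpGammaProp A P.n →
          (p ∈ stfr (pcpGammaLTL A P.n) π₁ h ↔ p ∈ stfr (pcpGammaLTL A P.n) π₂ h)) := by
  have hG_hash : PCPAP.hash ∈ pcpGammaProp A P.n := Or.inl rfl
  have hfin2 : ∀ x : Fin 2, x = 0 ∨ x = 1 := by decide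
  have hqvar : ∀ (ℓ ℓ' : Fin 2) (is : List (Fin P.n)) (h : ℕ), ℓ' ≠ ℓ →
      PCPAP.qvar ℓ' ∉ wfTrace P ℓ is h := by
    intro ℓ ℓ' is h hne hq
    rcases wfTrace_mem_cases P ℓ is h with he | ⟨r, hr, o, ho, he2, he⟩ <;> rw [he] at hq
    · exact absurd hq (by simp)
    · rw [mem_mset] at hq
      rcases hq with h1 | h1 | h1 | ⟨_, h1⟩
      · exact absurd h1 (by simp)
      · exact absurd h1 (by simp)
      · exact hne (PCPAP.qvar.inj h1)
      · exact absurd h1 (by simp)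
  constructor
  · rintro ⟨is, hne, hsol⟩
    refine ⟨wfTrace P 0 is, wfTrace P 1 is, ⟨0, is, hne, rfl⟩, ⟨1, is, hne, rfl⟩,
      fun h => hqvar 0 1 is h (by decide), fun h => hqvar 1 0 is h (by decide), ?_, ?_⟩
    · intro h a
      rw [wfTrace_sym, wfTrace_sym, hsol]
    · intro h p hp
      rw [wf_stfr_mem P 0 is hlen hne h p hp, wf_stfr_mem P 1 is hlen hne h p hp]
  · rintro ⟨π₁, π₂, ⟨ℓ₁, is₁, hne₁, rfl⟩, ⟨ℓ₂, is₂, hne₂, rfl⟩, hq1, hq2, hsym, hΓ⟩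
    have hk₁ : 0 < is₁.length := List.length_pos_iff.2 hne₁
    have hk₂ : 0 < is₂.length := List.length_pos_iff.2 hne₂
    have hq : ∀ (ℓ : Fin 2) (is : List (Fin P.n)), 0 < is.length →
        PCPAP.qvar ℓ ∈ wfTrace P ℓ is 1 := by
      intro ℓ is hk
      have e := wf_start P ℓ is hlen 0 hk
      rw [show (1:ℕ) = 1 + bsum P ℓ is 0 from rfl, e, mem_mset]
      tauto
    obtain rfl : ℓ₁ = 0 := by
      rcases hfin2 ℓ₁ with h | h
      · exact h
      · subst h; exact absurd (hq 1 is₁ hk₁) (hq1 1)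
    obtain rfl : ℓ₂ = 1 := by
      rcases hfin2 ℓ₂ with h | h
      · subst h; exact absurd (hq 0 is₂ hk₂) (hq2 1)
      · exact h
    have key : ∀ h p, p ∈ pcpGammaProp A P.n →
        (tval is₁ (min h (2*is₁.length+1)) p ↔ tval is₂ (min h (2*is₂.length+1)) p) := by
      intro h p hp
      rw [← wf_stfr_mem P 0 is₁ hlen hne₁ h p hp, ← wf_stfr_mem P 1 is₂ hlen hne₂ h p hp]
      exact hΓ h p hp
    have hklen : is₁.length = is₂.length := by
      by_contra hnel
      rcases Nat.lt_or_ge is₁.length is₂.length with hlt | hge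
      · have h1 := (key (2*is₁.length+1) PCPAP.hash hG_hash).1
        rw [min_self, min_eq_left (by omega)] at h1
        have h2 := h1 ((tval_top is₁ PCPAP.hash).2 rfl)
        exact absurd ((tval_odd is₂ is₁.length hlt PCPAP.hash).1 h2) (by simp)
      · have hlt : is₂.length < is₁.length := by omega
        have h1 := (key (2*is₂.length+1) PCPAP.hash hG_hash).2
        rw [min_self, min_eq_left (by omega)] at h1
        have h2 := h1 ((tval_top is₂ PCPAP.hash).2 rfl)
        exact absurd ((tval_odd is₁ is₂.length hlt PCPAP.hash).1 h2) (by simp)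
    have hentries : ∀ (r : ℕ) (hr1 : r < is₁.length) (hr2 : r < is₂.length),
        is₁[r] = is₂[r] := by
      intro r hr1 hr2
      have h1 := (key (2*r+1) (PCPAP.pvar (is₁[r]'hr1))
        (Or.inr ⟨is₁[r]'hr1, rfl⟩)).1
      rw [min_eq_left (by omega), min_eq_left (by omega)] at h1
      have h2 := h1 ((tval_odd is₁ r hr1 _).2 rfl)
      exact PCPAP.pvar.inj ((tval_odd is₂ r hr2 _).1 h2)
    have his : is₁ = is₂ := List.ext_getElem hklen hentries
    have hsym' : ∀ (g : ℕ) (a : A), ((is₁.map (P.word 0)).flatten[g]? = some a) ↔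
        ((is₂.map (P.word 1)).flatten[g]? = some a) := by
      intro g a
      have h1 := hsym (g+1) a
      rw [wfTrace_sym, wfTrace_sym] at h1
      simp only [Nat.add_sub_cancel] at h1
      constructor
      · intro h2; exact (h1.1 ⟨by omega, h2⟩).2
      · intro h2; exact (h1.2 ⟨by omega, h2⟩).2
    have hW : (is₁.map (P.word 0)).flatten = (is₂.map (P.word 1)).flatten := by
      apply List.ext_getElem?
      intro g
      cases hW2 : (is₂.map (P.word 1)).flatten[g]? with
      | some a => exact (hsym' g a).2 hW2
      | none =>
          cases hW1 : (is₁.map (P.word 0)).flatten[g]? with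
          | some a =>
              have := (hsym' g a).1 hW1
              rw [hW2] at this
              exact absurd this (by simp)
          | none => rfl
    rw [← his] at hW
    exact ⟨is₁, hne₁, hW⟩
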